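/- arXiv:1912.05212 — 3 statements merged into one kernel-verified Lean document; each statement's English description precedes it below -/
import Mathlib

section
/- If matrices A and B are balanced elementary equivalent, i.e., there exist nonnegative integer matrices S, R_A, R_B with A = S·R_A, B = S·R_B, and R_A·S = R_B·S, then det(A) = det(B). -/
/-! Since `X ^ m * χ(S R) = X ^ n * χ(R S)` for rectangular `S`, `R`, the characteristic polynomial
of `S R` only depends on `R S`; the determinant is its constant coefficient up to sign. -/

namespace Matrix

variable {R : Type*} [CommRing R] {ι κ : Type*} [Fintype ι] [Fintype κ] [DecidableEq ι]
  [DecidableEq κ]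

theorem charpoly_mul_eq_charpoly_mul_of_mul_eq (S : Matrix ι κ R) {T₁ T₂ : Matrix κ ι R}
    (h : T₁ * S = T₂ * S) : (S * T₁).charpoly = (S * T₂).charpoly :=
  (Polynomial.isRegular_X_pow (Fintype.card κ)).left.eq_iff.mp <| by
    rw [charpoly_mul_comm' S T₁, charpoly_mul_comm' S T₂, h]

theorem det_mul_eq_det_mul_of_mul_eq (S : Matrix ι κ R) {T₁ T₂ : Matrix κ ι R}
    (h : T₁ * S = T₂ * S) : (S * T₁).det = (S * T₂).det := by
  rw [det_eq_sign_charpoly_coeff, det_eq_sign_charpoly_coeff,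
    charpoly_mul_eq_charpoly_mul_of_mul_eq S h]

end Matrix

theorem balanced_elementary_equivalent_det_eq_general
    {n m : ℕ} (A B : Matrix (Fin n) (Fin n) ℤ)
    (S : Matrix (Fin n) (Fin m) ℤ) (RA RB : Matrix (Fin m) (Fin n) ℤ)
    (hA : A = S * RA) (hB : B = S * RB) (hbal : RA * S = RB * S) :
    A.det = B.det := by
  rw [hA, hB]
  exact S.det_mul_eq_det_mul_of_mul_eq hbal

/-- Balanced elementary equivalent matrices (over ℤ, with nonnegative entries)
have equal determinants. -/
theorem balanced_elementary_equivalent_det_eq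
    {n m : ℕ} (A B : Matrix (Fin n) (Fin n) ℤ)
    (S : Matrix (Fin n) (Fin m) ℤ) (RA RB : Matrix (Fin m) (Fin n) ℤ)
    (hSpos : ∀ i j, 0 ≤ S i j) (hRApos : ∀ i j, 0 ≤ RA i j) (hRBpos : ∀ i j, 0 ≤ RB i j)
    (hA : A = S * RA) (hB : B = S * RB) (hbal : RA * S = RB * S) :
    A.det = B.det :=
  balanced_elementary_equivalent_det_eq_general A B S RA RB hA hB hbal
end

section
/- If A = S·R_A, B = S·R_B, and R_A·S = R_B·S for matrices over the nonnegative integers, then for every positive integer n, B^(n+1) = A^n · B. -/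
/-! The balance condition `R_A S = R_B S` gives `B² = S R_B S R_B = S R_A S R_B = A B`, and from
`B² = A B` an induction gives `B^(n+1) = A^n B` in any monoid. -/

theorem pow_succ_eq_pow_mul_of_mul_self_eq {M : Type*} [Monoid M] {a b : M} (h : b * b = a * b)
    (n : ℕ) : b ^ (n + 1) = a ^ n * b := by
  induction n with
  | zero => simp
  | succ n ih =>
    calc b ^ (n + 1 + 1) = a ^ n * (b * b) := by rw [pow_succ, ih, mul_assoc]
      _ = a ^ (n + 1) * b := by rw [h, ← mul_assoc, ← pow_succ]

theorem Matrix.mul_self_eq_mul_of_mul_eq {l m α : Type*} [Fintype l] [Fintype m]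
    [NonUnitalSemiring α] {S : Matrix l m α} {RA RB : Matrix m l α} (hbal : RA * S = RB * S) :
    (S * RB) * (S * RB) = (S * RA) * (S * RB) := by
  rw [Matrix.mul_assoc, ← Matrix.mul_assoc RB, ← hbal, Matrix.mul_assoc, ← Matrix.mul_assoc]

/-- If A = S·R_A, B = S·R_B and R_A·S = R_B·S over ℕ, then B^(n+1) = A^n·B for
every positive integer n. -/
theorem balanced_elementary_equivalent_pow_right
    {d m : ℕ} (A B : Matrix (Fin d) (Fin d) ℕ)
    (S : Matrix (Fin d) (Fin m) ℕ) (RA RB : Matrix (Fin m) (Fin d) ℕ)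
    (hA : A = S * RA) (hB : B = S * RB) (hbal : RA * S = RB * S) :
    ∀ n : ℕ, 0 < n → B ^ (n + 1) = A ^ n * B := by
  have hB_sq : B * B = A * B := by
    subst hA hB
    exact Matrix.mul_self_eq_mul_of_mul_eq hbal
  exact fun n _ => pow_succ_eq_pow_mul_of_mul_self_eq hB_sq n
end

section
/- There is a one-to-one correspondence between (ℓ,c)-block maps ψ : E^(1+ℓ+c) → F^(1+ℓ) and (ℓ,c)-sliding block codes h : E^∞ → F^∞; under this correspondence ψ satisfies the injectivity (resp. surjectivity) condition if and only if h is injective (resp. surjective). -/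
structure DGraph where
  V : Type
  E : Type
  src : E → V
  rng : E → V

namespace DGraph

def PathSpace (G : DGraph) : Type :=
  {x : ℕ → G.E // ∀ i, G.rng (x i) = G.src (x (i + 1))}

instance (G : DGraph) : TopologicalSpace G.PathSpace :=
  TopologicalSpace.induced Subtype.val (@Pi.topologicalSpace ℕ (fun _ => G.E) (fun _ => ⊥))

def shift (G : DGraph) (x : G.PathSpace) : G.PathSpace :=
  ⟨fun i => x.1 (i + 1), fun i => x.2 (i + 1)⟩

def NoSinks (G : DGraph) : Prop := ∀ v : G.V, ∃ e : G.E, G.src e = v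

def NoSources (G : DGraph) : Prop := ∀ v : G.V, ∃ e : G.E, G.rng e = v

def IsFinite (G : DGraph) : Prop := Finite G.V ∧ Finite G.E

def FinPath (G : DGraph) (n : ℕ) : Type :=
  {μ : Fin n → G.E // ∀ i j : Fin n, (j : ℕ) = (i : ℕ) + 1 → G.rng (μ i) = G.src (μ j)}

def seg (G : DGraph) (x : G.PathSpace) (i n : ℕ) : G.FinPath n :=
  ⟨fun j => x.1 (i + (j : ℕ)), by
    rintro ⟨a, ha⟩ ⟨b, hb⟩ hab
    simp only at hab
    subst hab
    exact x.2 (i + a)⟩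

def cyl (G : DGraph) {n : ℕ} (μ : G.FinPath n) : Set G.PathSpace :=
  {x | G.seg x 0 n = μ}

def lastEdge (G : DGraph) {ℓ : ℕ} (μ : G.FinPath (1 + ℓ)) : G.E :=
  μ.1 ⟨ℓ, by omega⟩

def IsSlidingBlockCode (E F : DGraph) (ℓ : ℕ) (h : E.PathSpace → F.PathSpace) : Prop :=
  Continuous h ∧ ∀ x, F.shift^[ℓ + 1] (h x) = F.shift^[ℓ] (h (E.shift x))

def HasContinuityConstant (E F : DGraph) (ℓ c : ℕ) (h : E.PathSpace → F.PathSpace) : Prop :=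
  ∀ k, ℓ ≤ k → ∀ x : E.PathSpace,
    h '' E.cyl (E.seg x 0 (k + c + 1)) ⊆ F.cyl (F.seg (h x) 0 (k + 1))

def IsConjugacy (E F : DGraph) (h : E.PathSpace → F.PathSpace) : Prop :=
  Continuous h ∧ Function.Bijective h ∧ ∀ x, F.shift (h x) = h (E.shift x)

def IsCompatible (E F : DGraph) (ℓ c : ℕ)
    (ψ : E.FinPath (1 + ℓ + c) → F.FinPath (1 + ℓ)) : Prop :=
  ∀ x : E.PathSpace,
    F.rng (F.lastEdge (ψ (E.seg x 0 (1 + ℓ + c)))) =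
      F.src (F.lastEdge (ψ (E.seg x 1 (1 + ℓ + c))))

def MatchesOut (E F : DGraph) (ℓ c : ℕ) (ψ : E.FinPath (1 + ℓ + c) → F.FinPath (1 + ℓ))
    (x : E.PathSpace) {k : ℕ} (hk : ℓ ≤ k) (β : F.FinPath (1 + k)) : Prop :=
  (∀ j : Fin (1 + ℓ), β.1 ⟨(j : ℕ), by have := j.isLt; omega⟩ = (ψ (E.seg x 0 (1 + ℓ + c))).1 j) ∧
  (∀ i, (hi : ℓ + i ≤ k) → β.1 ⟨ℓ + i, by omega⟩ = F.lastEdge (ψ (E.seg x i (1 + ℓ + c))))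

def InducedOnPaths (E F : DGraph) (ℓ c : ℕ) (ψ : E.FinPath (1 + ℓ + c) → F.FinPath (1 + ℓ))
    (h : E.PathSpace → F.PathSpace) : Prop :=
  ∀ (x : E.PathSpace) (k : ℕ) (hk : ℓ ≤ k), MatchesOut E F ℓ c ψ x hk (F.seg (h x) 0 (1 + k))

def SurjCondition (E F : DGraph) (ℓ c : ℕ)
    (ψ : E.FinPath (1 + ℓ + c) → F.FinPath (1 + ℓ)) : Prop :=
  ∀ k (hk : ℓ ≤ k) (β : F.FinPath (1 + k)), ∃ x : E.PathSpace, MatchesOut E F ℓ c ψ x hk β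

def InjCondition (E F : DGraph) (ℓ c : ℕ)
    (ψ : E.FinPath (1 + ℓ + c) → F.FinPath (1 + ℓ)) : Prop :=
  ∀ k, ℓ ≤ k → ∃ K : ℕ, ∀ x x' : E.PathSpace,
    (ψ (E.seg x 0 (1 + ℓ + c)) = ψ (E.seg x' 0 (1 + ℓ + c)) ∧
      ∀ i, ℓ + i ≤ k + K →
        F.lastEdge (ψ (E.seg x i (1 + ℓ + c))) = F.lastEdge (ψ (E.seg x' i (1 + ℓ + c)))) →
    E.seg x 0 (k + 1) = E.seg x' 0 (k + 1)

def higherBlock (G : DGraph) (n : ℕ) : DGraph where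
  V := G.FinPath n
  E := G.FinPath (n + 1)
  src := fun μ => ⟨fun i => μ.1 ⟨(i : ℕ), by have := i.isLt; omega⟩, by
    rintro ⟨a, ha⟩ ⟨b, hb⟩ hab
    exact μ.2 ⟨a, by omega⟩ ⟨b, by omega⟩ hab⟩
  rng := fun μ => ⟨fun i => μ.1 ⟨(i : ℕ) + 1, by have := i.isLt; omega⟩, by
    rintro ⟨a, ha⟩ ⟨b, hb⟩ hab
    exact μ.2 ⟨a + 1, by omega⟩ ⟨b + 1, by omega⟩ (by simp only at hab ⊢; omega)⟩

def toHigherBlock (G : DGraph) (n : ℕ) (x : G.PathSpace) : (G.higherBlock n).PathSpace :=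
  ⟨fun i => G.seg x i (n + 1), by
    intro i
    apply Subtype.ext
    funext j
    show x.1 (i + ((j : ℕ) + 1)) = x.1 ((i + 1) + (j : ℕ))
    have h2 : i + ((j : ℕ) + 1) = (i + 1) + (j : ℕ) := by omega
    rw [h2]⟩

end DGraph

/-!
A compatible block map `ψ` determines `h` by reading the image of `x` off `ψ` on the sliding
windows of `x`: first the block `ψ x_[0, ℓ+c]`, then the last edge of `ψ x_[i, i+ℓ+c]` for each
`i ≥ 1`. Conversely, a sliding block code `h` with continuity constant `c` gives the block map
`ψ μ = h(x)_[0, ℓ]` for any path `x` extending `μ` (one exists since `E` has no sinks, and by the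
continuity constant the choice does not matter); commutation with the shift shows that this `ψ`
induces `h` again.

Both conditions on `ψ` are statements about windows of `h(x)`: the surjectivity condition says
that every finite path of `F` is an initial window of some image, and the injectivity condition
that long enough initial windows of `h(x)` determine initial windows of `x` uniformly. Compactness
of `E^∞` turns these finitary statements into surjectivity and injectivity of `h`, and back.
-/

namespace DGraph

section Paths

variable {G : DGraph}

instance : TopologicalSpace G.E := ⊥

instance : DiscreteTopology G.E := ⟨rfl⟩

instance (n : ℕ) : TopologicalSpace (G.FinPath n) := instTopologicalSpaceSubtype

instance (n : ℕ) : DiscreteTopology (G.FinPath n) := instDiscreteTopologySubtype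

theorem seg_apply (x : G.PathSpace) (i n j : ℕ) (hj : j < n) :
    (G.seg x i n).1 ⟨j, hj⟩ = x.1 (i + j) :=
  rfl

theorem seg_eq_seg_iff {x y : G.PathSpace} {i i' n : ℕ} :
    G.seg x i n = G.seg y i' n ↔ ∀ j < n, x.1 (i + j) = y.1 (i' + j) := by
  refine ⟨fun h j hj => congrArg (fun μ : G.FinPath n => μ.1 ⟨j, hj⟩) h, fun h => ?_⟩
  exact Subtype.ext (funext fun j => h j j.2)

theorem seg_zero_eq_iff {x : G.PathSpace} {n : ℕ} {μ : G.FinPath n} :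
    G.seg x 0 n = μ ↔ ∀ j (hj : j < n), x.1 j = μ.1 ⟨j, hj⟩ := by
  refine ⟨fun h j hj => by rw [← h, seg_apply, Nat.zero_add], fun h => ?_⟩
  exact Subtype.ext (funext fun j => (congrArg x.1 (Nat.zero_add j)).trans (h j j.2))

theorem seg_eq_seg_of_le {x y : G.PathSpace} {i i' m n : ℕ} (hmn : m ≤ n)
    (h : G.seg x i n = G.seg y i' n) : G.seg x i m = G.seg y i' m :=
  seg_eq_seg_iff.2 fun j hj => seg_eq_seg_iff.1 h j (by omega)

theorem eq_of_forall_exists_seg_eq {x y : G.PathSpace}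
    (h : ∀ n, ∃ m, n < m ∧ G.seg x 0 m = G.seg y 0 m) : x = y := by
  refine Subtype.ext (funext fun n => ?_)
  obtain ⟨m, hnm, hm⟩ := h n
  simpa using seg_eq_seg_iff.1 hm n hnm

theorem shift_iterate_apply (x : G.PathSpace) (m n : ℕ) :
    (G.shift^[m] x).1 n = x.1 (m + n) := by
  induction m generalizing x with
  | zero => simp
  | succ m ih =>
    rw [Function.iterate_succ_apply, ih]
    exact congrArg x.1 (by omega)

theorem seg_shift_iterate (x : G.PathSpace) (m i n : ℕ) :
    G.seg (G.shift^[m] x) i n = G.seg x (m + i) n :=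
  seg_eq_seg_iff.2 fun j _ => by rw [shift_iterate_apply, Nat.add_assoc]

theorem continuous_apply_pathSpace (i : ℕ) : Continuous fun x : G.PathSpace => x.1 i :=
  (continuous_apply i).comp continuous_induced_dom

theorem continuous_seg (i n : ℕ) : Continuous fun x : G.PathSpace => G.seg x i n :=
  continuous_induced_rng.2 (continuous_pi fun j => continuous_apply_pathSpace (i + j))

instance [Finite G.E] : CompactSpace G.PathSpace := by
  let _ : TopologicalSpace G.V := ⊥
  have : DiscreteTopology G.V := ⟨rfl⟩
  have hclosed : IsClosed {x : ℕ → G.E | ∀ i, G.rng (x i) = G.src (x (i + 1))} := by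
    rw [Set.ofPred_forall]
    exact isClosed_iInter fun i => isClosed_eq
      (continuous_of_discreteTopology.comp (continuous_apply i))
      (continuous_of_discreteTopology.comp (continuous_apply (i + 1)))
  exact isCompact_iff_compactSpace.mp hclosed.isCompact

theorem exists_seg_eq (hns : G.NoSinks) {n : ℕ} (hn : 0 < n) (μ : G.FinPath n) :
    ∃ x : G.PathSpace, G.seg x 0 n = μ := by
  choose next hnext using fun e => hns (G.rng e)
  let last := μ.1 ⟨n - 1, by omega⟩
  let x : ℕ → G.E := fun j => if hj : j < n then μ.1 ⟨j, hj⟩ else next^[j - (n - 1)] last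
  have hx : ∀ i, G.rng (x i) = G.src (x (i + 1)) := by
    intro i
    rcases lt_trichotomy (i + 1) n with hi | hi | hi
    · simp only [x, dif_pos hi, dif_pos (show i < n by omega)]
      exact μ.2 _ _ rfl
    · simp only [x, dif_pos (show i < n by omega), dif_neg (show ¬i + 1 < n by omega),
        show i + 1 - (n - 1) = 1 by omega, Function.iterate_one, hnext]
      subst hi
      rfl
    · simp only [x, dif_neg (show ¬i < n by omega), dif_neg (show ¬i + 1 < n by omega),
        show i + 1 - (n - 1) = i - (n - 1) + 1 by omega, Function.iterate_succ_apply', hnext]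
  exact ⟨⟨x, hx⟩, seg_zero_eq_iff.2 fun j hj => dif_pos hj⟩

end Paths

variable {E F : DGraph} {ℓ c : ℕ} {ψ : E.FinPath (1 + ℓ + c) → F.FinPath (1 + ℓ)}
  {h : E.PathSpace → F.PathSpace}

/-- Edge `j` of the image of `x` under `ψ`: for `j ≤ ℓ` it is edge `j` of `ψ x_[0, ℓ+c]`, after
that the last edge of `ψ x_[j-ℓ, j+c]` (truncated subtraction makes this one formula). -/
def slide (ψ : E.FinPath (1 + ℓ + c) → F.FinPath (1 + ℓ)) (x : E.PathSpace) (j : ℕ) : F.E :=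
  (ψ (E.seg x (j - ℓ) (1 + ℓ + c))).1 ⟨min j ℓ, by omega⟩

theorem slide_of_le (x : E.PathSpace) {j : ℕ} (hj : j ≤ ℓ) :
    slide ψ x j = (ψ (E.seg x 0 (1 + ℓ + c))).1 ⟨j, by omega⟩ := by
  simp only [slide, show j - ℓ = 0 by omega, show min j ℓ = j by omega]

theorem slide_add (x : E.PathSpace) (i : ℕ) :
    slide ψ x (ℓ + i) = F.lastEdge (ψ (E.seg x i (1 + ℓ + c))) := by
  simp only [slide, Nat.add_sub_cancel_left, Nat.min_eq_right (Nat.le_add_right ℓ i), lastEdge]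

theorem continuous_slide_apply (ψ : E.FinPath (1 + ℓ + c) → F.FinPath (1 + ℓ)) (j : ℕ) :
    Continuous fun x => slide ψ x j :=
  (continuous_of_discreteTopology (f := fun μ : E.FinPath (1 + ℓ + c) =>
    (ψ μ).1 ⟨min j ℓ, by omega⟩)).comp (continuous_seg (j - ℓ) (1 + ℓ + c))

theorem slide_succ_eq (hψ : IsCompatible E F ℓ c ψ) (x : E.PathSpace) (n : ℕ) :
    F.rng (slide ψ x n) = F.src (slide ψ x (n + 1)) := by
  by_cases hn : n < ℓ
  · rw [slide_of_le x (by omega), slide_of_le x (by omega)]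
    exact (ψ _).2 _ _ rfl
  · obtain ⟨i, rfl⟩ : ∃ i, n = ℓ + i := ⟨n - ℓ, by omega⟩
    have := hψ (E.shift^[i] x)
    rwa [seg_shift_iterate, seg_shift_iterate, Nat.add_zero, ← slide_add, ← slide_add] at this

theorem matchesOut_iff (x : E.PathSpace) {k : ℕ} (hk : ℓ ≤ k) (β : F.FinPath (1 + k)) :
    MatchesOut E F ℓ c ψ x hk β ↔ ∀ j (hj : j < 1 + k), β.1 ⟨j, hj⟩ = slide ψ x j := by
  constructor
  · rintro ⟨hfirst, hlast⟩ j hj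
    by_cases hjℓ : j ≤ ℓ
    · rw [slide_of_le x hjℓ]
      exact hfirst ⟨j, by omega⟩
    · obtain ⟨i, rfl⟩ : ∃ i, j = ℓ + i := ⟨j - ℓ, by omega⟩
      rw [slide_add]
      exact hlast i (by omega)
  · intro H
    refine ⟨fun j => (H j (by omega)).trans (slide_of_le x (by omega)), fun i hi => ?_⟩
    exact (H (ℓ + i) (by omega)).trans (slide_add x i)

theorem inducedOnPaths_iff : InducedOnPaths E F ℓ c ψ h ↔ ∀ x, (h x).1 = slide ψ x := by
  simp only [InducedOnPaths, matchesOut_iff, seg_apply, Nat.zero_add]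
  exact ⟨fun H x => funext fun j => H x (max j ℓ) (le_max_right _ _) j (by omega),
    fun H x _ _ j _ => congrFun (H x) j⟩

def blockCode (ψ : E.FinPath (1 + ℓ + c) → F.FinPath (1 + ℓ)) (hψ : IsCompatible E F ℓ c ψ)
    (x : E.PathSpace) : F.PathSpace :=
  ⟨slide ψ x, slide_succ_eq hψ x⟩

theorem inducedOnPaths_blockCode (hψ : IsCompatible E F ℓ c ψ) :
    InducedOnPaths E F ℓ c ψ (blockCode ψ hψ) :=
  inducedOnPaths_iff.2 fun _ => rfl

namespace InducedOnPaths

theorem apply_eq (hind : InducedOnPaths E F ℓ c ψ h) (x : E.PathSpace) (j : ℕ) :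
    (h x).1 j = slide ψ x j :=
  congrFun (inducedOnPaths_iff.1 hind x) j

theorem eq_blockCode (hind : InducedOnPaths E F ℓ c ψ h) (hψ : IsCompatible E F ℓ c ψ) :
    h = blockCode ψ hψ :=
  funext fun x => Subtype.ext (inducedOnPaths_iff.1 hind x)

theorem seg_zero_eq (hind : InducedOnPaths E F ℓ c ψ h) (x : E.PathSpace) :
    F.seg (h x) 0 (1 + ℓ) = ψ (E.seg x 0 (1 + ℓ + c)) :=
  seg_zero_eq_iff.2 fun j hj => (hind.apply_eq x j).trans (slide_of_le x (by omega))

theorem isCompatible (hind : InducedOnPaths E F ℓ c ψ h) : IsCompatible E F ℓ c ψ := by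
  intro x
  rw [← slide_add x 0, ← slide_add x 1, ← hind.apply_eq, ← hind.apply_eq]
  exact (h x).2 ℓ

theorem continuous (hind : InducedOnPaths E F ℓ c ψ h) : Continuous h :=
  continuous_induced_rng.2 <| continuous_pi fun j => by
    show Continuous fun x => (h x).1 j
    simpa only [hind.apply_eq] using continuous_slide_apply ψ j

theorem isSlidingBlockCode (hind : InducedOnPaths E F ℓ c ψ h) : IsSlidingBlockCode E F ℓ h := by
  refine ⟨hind.continuous, fun x => Subtype.ext (funext fun n => ?_)⟩
  rw [shift_iterate_apply, shift_iterate_apply, hind.apply_eq, hind.apply_eq, Nat.add_assoc,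
    slide_add, slide_add, ← Function.iterate_one E.shift, seg_shift_iterate]

theorem hasContinuityConstant (hind : InducedOnPaths E F ℓ c ψ h) :
    HasContinuityConstant E F ℓ c h := by
  rintro k hk x _ ⟨y, hy, rfl⟩
  refine seg_eq_seg_iff.2 fun j hj => ?_
  rw [hind.apply_eq, hind.apply_eq, slide, slide, seg_eq_seg_iff.2 fun m hm => ?_]
  simpa using seg_eq_seg_iff.1 hy (j - ℓ + m) (by omega)

theorem matchesOut_iff (hind : InducedOnPaths E F ℓ c ψ h) (x : E.PathSpace) {k : ℕ}
    (hk : ℓ ≤ k) (β : F.FinPath (1 + k)) :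
    MatchesOut E F ℓ c ψ x hk β ↔ F.seg (h x) 0 (1 + k) = β := by
  rw [DGraph.matchesOut_iff, seg_zero_eq_iff]
  exact forall₂_congr fun j _ => by rw [hind.apply_eq, eq_comm]

theorem seg_eq_seg_iff (hind : InducedOnPaths E F ℓ c ψ h) (x x' : E.PathSpace) {N : ℕ}
    (hN : ℓ ≤ N) :
    F.seg (h x) 0 (1 + N) = F.seg (h x') 0 (1 + N) ↔
      ψ (E.seg x 0 (1 + ℓ + c)) = ψ (E.seg x' 0 (1 + ℓ + c)) ∧
        ∀ i, ℓ + i ≤ N → F.lastEdge (ψ (E.seg x i (1 + ℓ + c))) =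
          F.lastEdge (ψ (E.seg x' i (1 + ℓ + c))) := by
  obtain ⟨hfirst, hlast⟩ := hind x N hN
  obtain ⟨hfirst', hlast'⟩ := hind x' N hN
  constructor
  · intro hseg
    refine ⟨Subtype.ext (funext fun j => ?_), fun i hi => ?_⟩
    · rw [← hfirst j, ← hfirst' j, hseg]
    · rw [← hlast i hi, ← hlast' i hi, hseg]
  · rintro ⟨hψ, hψlast⟩
    refine ((hind.matchesOut_iff x' hN _).1 ⟨fun j => ?_, fun i hi => ?_⟩).symm
    · rw [hfirst j, hψ]
    · rw [hlast i hi, hψlast i hi]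

end InducedOnPaths

theorem HasContinuityConstant.seg_eq (hcc : HasContinuityConstant E F ℓ c h) {k : ℕ}
    (hk : ℓ ≤ k) {x y : E.PathSpace} (hxy : E.seg x 0 (k + c + 1) = E.seg y 0 (k + c + 1)) :
    F.seg (h x) 0 (k + 1) = F.seg (h y) 0 (k + 1) :=
  hcc k hk y ⟨x, hxy, rfl⟩

theorem IsSlidingBlockCode.apply_shift_iterate (hs : IsSlidingBlockCode E F ℓ h)
    (x : E.PathSpace) (i m : ℕ) : (h (E.shift^[i] x)).1 (ℓ + m) = (h x).1 (ℓ + i + m) := by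
  induction i generalizing x with
  | zero => rfl
  | succ i ih =>
    have := congrArg (fun y : F.PathSpace => y.1 (i + m)) (hs.2 x)
    simp only [shift_iterate_apply] at this
    rw [Function.iterate_succ_apply, ih, Nat.add_assoc ℓ i, ← this]
    exact congrArg _ (by omega)

noncomputable def blockMapOf (ℓ c : ℕ) (hns : E.NoSinks) (h : E.PathSpace → F.PathSpace)
    (μ : E.FinPath (1 + ℓ + c)) : F.FinPath (1 + ℓ) :=
  F.seg (h (exists_seg_eq hns (by omega) μ).choose) 0 (1 + ℓ)

theorem InducedOnPaths.blockMapOf_eq (hind : InducedOnPaths E F ℓ c ψ h) (hns : E.NoSinks) :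
    blockMapOf ℓ c hns h = ψ :=
  funext fun μ => (hind.seg_zero_eq _).trans
    (congrArg ψ (exists_seg_eq hns (by omega) μ).choose_spec)

theorem inducedOnPaths_blockMapOf (hns : E.NoSinks) (hs : IsSlidingBlockCode E F ℓ h)
    (hcc : HasContinuityConstant E F ℓ c h) :
    InducedOnPaths E F ℓ c (blockMapOf ℓ c hns h) h := by
  refine inducedOnPaths_iff.2 fun x => funext fun j => ?_
  set y := (exists_seg_eq hns (by omega) (E.seg x (j - ℓ) (1 + ℓ + c))).choose
  have hy : E.seg y 0 (ℓ + c + 1) = E.seg (E.shift^[j - ℓ] x) 0 (ℓ + c + 1) := by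
    rw [seg_shift_iterate, Nat.add_zero, show ℓ + c + 1 = 1 + ℓ + c by omega]
    exact (exists_seg_eq hns (by omega) (E.seg x (j - ℓ) (1 + ℓ + c))).choose_spec
  have hhy := seg_eq_seg_iff.1 (hcc.seg_eq le_rfl hy) (min j ℓ) (by omega)
  simp only [Nat.zero_add] at hhy
  show (h x).1 j = (h y).1 (0 + min j ℓ)
  rw [Nat.zero_add, hhy]
  by_cases hj : j ≤ ℓ
  · simp only [show j - ℓ = 0 by omega, show min j ℓ = j by omega, Function.iterate_zero_apply]
  · have := hs.apply_shift_iterate x (j - ℓ) 0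
    simp only [Nat.add_zero, show ℓ + (j - ℓ) = j by omega] at this
    rw [min_eq_right (by omega), this]

noncomputable def blockCodeEquiv (hns : E.NoSinks) (ℓ c : ℕ) :
    {ψ : E.FinPath (1 + ℓ + c) → F.FinPath (1 + ℓ) // IsCompatible E F ℓ c ψ} ≃
      {h : E.PathSpace → F.PathSpace //
        IsSlidingBlockCode E F ℓ h ∧ HasContinuityConstant E F ℓ c h} where
  toFun ψ := ⟨blockCode ψ.1 ψ.2, (inducedOnPaths_blockCode ψ.2).isSlidingBlockCode,
    (inducedOnPaths_blockCode ψ.2).hasContinuityConstant⟩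
  invFun h := ⟨blockMapOf ℓ c hns h.1, (inducedOnPaths_blockMapOf hns h.2.1 h.2.2).isCompatible⟩
  left_inv ψ := Subtype.ext ((inducedOnPaths_blockCode ψ.2).blockMapOf_eq hns)
  right_inv h := Subtype.ext <|
    have hind := inducedOnPaths_blockMapOf hns h.2.1 h.2.2
    (hind.eq_blockCode hind.isCompatible).symm

theorem surjective_iff_forall_exists_seg_eq [CompactSpace E.PathSpace] (hcont : Continuous h)
    (hns : F.NoSinks) (ℓ : ℕ) :
    Function.Surjective h ↔
      ∀ k, ℓ ≤ k → ∀ β : F.FinPath (1 + k), ∃ x, F.seg (h x) 0 (1 + k) = β := by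
  refine ⟨fun hsurj k _ β => ?_, fun H y => ?_⟩
  · obtain ⟨y, rfl⟩ := exists_seg_eq hns (by omega) β
    obtain ⟨x, rfl⟩ := hsurj y
    exact ⟨x, rfl⟩
  let D : ℕ → Set E.PathSpace := fun n =>
    {x | F.seg (h x) 0 (1 + (ℓ + n)) = F.seg y 0 (1 + (ℓ + n))}
  have hclosed (n : ℕ) : IsClosed (D n) :=
    isClosed_eq ((continuous_seg 0 _).comp hcont) continuous_const
  obtain ⟨x, hx⟩ := IsCompact.nonempty_iInter_of_sequence_nonempty_isCompact_isClosed D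
    (fun n x hx => seg_eq_seg_of_le (by omega) hx) (fun n => H _ (by omega) _)
    (hclosed 0).isCompact hclosed
  exact ⟨x, eq_of_forall_exists_seg_eq fun n => ⟨_, by omega, Set.mem_iInter.1 hx n⟩⟩

theorem injective_iff_forall_exists_seg_eq [CompactSpace E.PathSpace] (hcont : Continuous h)
    (ℓ : ℕ) :
    Function.Injective h ↔ ∀ k, ℓ ≤ k → ∃ K, ∀ x x' : E.PathSpace,
      F.seg (h x) 0 (1 + (k + K)) = F.seg (h x') 0 (1 + (k + K)) →
        E.seg x 0 (k + 1) = E.seg x' 0 (k + 1) := by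
  refine ⟨fun hinj k _ => ?_, fun H x x' hxx => eq_of_forall_exists_seg_eq fun n => ?_⟩
  · by_contra! hbad
    let S : ℕ → Set (E.PathSpace × E.PathSpace) := fun K =>
      {p | F.seg (h p.1) 0 (1 + (k + K)) = F.seg (h p.2) 0 (1 + (k + K)) ∧
        E.seg p.1 0 (k + 1) ≠ E.seg p.2 0 (k + 1)}
    have hnonempty (K : ℕ) : (S K).Nonempty := by
      obtain ⟨x, x', hxx', hne⟩ := hbad K
      exact ⟨(x, x'), hxx', hne⟩
    have hclosed (K : ℕ) : IsClosed (S K) := by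
      have hseg := continuous_seg (G := E) 0 (k + 1)
      exact (isClosed_eq ((continuous_seg 0 _).comp (hcont.comp continuous_fst))
        ((continuous_seg 0 _).comp (hcont.comp continuous_snd))).inter
        ((isOpen_discrete {q : E.FinPath (k + 1) × E.FinPath (k + 1) | q.1 = q.2}).preimage
          ((hseg.comp continuous_fst).prodMk (hseg.comp continuous_snd))).isClosed_compl
    obtain ⟨⟨x, x'⟩, hp⟩ := IsCompact.nonempty_iInter_of_sequence_nonempty_isCompact_isClosed S
      (fun K p hp => ⟨seg_eq_seg_of_le (by omega) hp.1, hp.2⟩) hnonempty (hclosed 0).isCompact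
      hclosed
    have hxx' : h x = h x' :=
      eq_of_forall_exists_seg_eq fun n => ⟨_, by omega, (Set.mem_iInter.1 hp n).1⟩
    exact (Set.mem_iInter.1 hp 0).2 (by rw [hinj hxx'])
  · obtain ⟨K, hK⟩ := H (max n ℓ) (le_max_right _ _)
    exact ⟨_, by omega, hK x x' (by rw [hxx])⟩

theorem InducedOnPaths.surjCondition_iff [CompactSpace E.PathSpace]
    (hind : InducedOnPaths E F ℓ c ψ h) (hns : F.NoSinks) :
    SurjCondition E F ℓ c ψ ↔ Function.Surjective h := by
  rw [surjective_iff_forall_exists_seg_eq hind.continuous hns ℓ]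
  exact forall₃_congr fun k hk β => exists_congr fun x => hind.matchesOut_iff x hk β

theorem InducedOnPaths.injCondition_iff [CompactSpace E.PathSpace]
    (hind : InducedOnPaths E F ℓ c ψ h) : InjCondition E F ℓ c ψ ↔ Function.Injective h := by
  rw [injective_iff_forall_exists_seg_eq hind.continuous ℓ]
  exact forall₂_congr fun k hk => exists_congr fun K => forall₂_congr fun x x' => by
    rw [hind.seg_eq_seg_iff x x' (by omega)]

end DGraph

theorem blockMap_slidingBlockCode_correspondence_general (E F : DGraph)
    (hEfin : E.IsFinite) (hEns : E.NoSinks) (hFns : F.NoSinks)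
    (ℓ c : ℕ) :
    ∃ Φ : {ψ : E.FinPath (1 + ℓ + c) → F.FinPath (1 + ℓ) // DGraph.IsCompatible E F ℓ c ψ} ≃
        {h : E.PathSpace → F.PathSpace //
          DGraph.IsSlidingBlockCode E F ℓ h ∧ DGraph.HasContinuityConstant E F ℓ c h},
      ∀ ψ, DGraph.InducedOnPaths E F ℓ c ψ.1 (Φ ψ).1 ∧
        (DGraph.SurjCondition E F ℓ c ψ.1 ↔ Function.Surjective (Φ ψ).1) ∧
        (DGraph.InjCondition E F ℓ c ψ.1 ↔ Function.Injective (Φ ψ).1) := by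
  have : Finite E.E := hEfin.2
  refine ⟨DGraph.blockCodeEquiv hEns ℓ c, fun ψ => ?_⟩
  have hind := DGraph.inducedOnPaths_blockCode ψ.2
  exact ⟨hind, hind.surjCondition_iff hFns, hind.injCondition_iff⟩

/-- There is a one-to-one correspondence between (ℓ,c)-block maps ψ and
(ℓ,c)-sliding block codes h, under which ψ satisfies the surjectivity (resp.
injectivity) condition if and only if h is surjective (resp. injective). -/
theorem blockMap_slidingBlockCode_correspondence (E F : DGraph)
    (hEfin : E.IsFinite) (hFfin : F.IsFinite) (hEns : E.NoSinks) (hFns : F.NoSinks)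
    (ℓ c : ℕ) :
    ∃ Φ : {ψ : E.FinPath (1 + ℓ + c) → F.FinPath (1 + ℓ) // DGraph.IsCompatible E F ℓ c ψ} ≃
        {h : E.PathSpace → F.PathSpace //
          DGraph.IsSlidingBlockCode E F ℓ h ∧ DGraph.HasContinuityConstant E F ℓ c h},
      ∀ ψ, DGraph.InducedOnPaths E F ℓ c ψ.1 (Φ ψ).1 ∧
        (DGraph.SurjCondition E F ℓ c ψ.1 ↔ Function.Surjective (Φ ψ).1) ∧
        (DGraph.InjCondition E F ℓ c ψ.1 ↔ Function.Injective (Φ ψ).1) :=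
  blockMap_slidingBlockCode_correspondence_general E F hEfin hEns hFns ℓ c
end
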